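/- Let A : ℝ³ → ℝ³ be an invertible affine map with linear part L. Then there exists a positive real number α* (namely α* = (det L)²) such that: (i) for every affinely independent quadruple of points y₀, y₁, y₂, y₃ in ℝ³, one has cm(A y₀, A y₁, A y₂, A y₃) = α* · cm(y₀, y₁, y₂, y₃); (ii) for every quintuple of points y₀,…,y₄ in ℝ³ with y₁ ≠ y₃ and y₂ ≠ y₄, the five-equation system ⁴q'_j = α·⁴q_j (j = 0,…,4), built from the quintuple and its image quintuple A y₀,…,A y₄, has a solution with α = α* and t, s, t', s' > 0; (iii) for every quintuple of points y₀,…,y₄ in ℝ³ with y₁ ≠ y₃, y₂ ≠ y₄ and y₁ ≠ y₄, the seven-equation system consisting of ⁵q'_j = α·⁵q_j (j = 0,…,4) together with ⁵q(t,s,r) = 0 and ⁵q'(t',s',r') = 0, built from the quintuple and its image quintuple, has a solution with α = α* and t, s, r, t', s', r' > 0. -/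

import Mathlib

/-!
Four-point Cayley–Menger determinants are `8` times the Gram determinant of the edge vectors at
the first point, and in an orthonormal basis a Gram determinant is the square of the coordinate
determinant, so an affine map `A` multiplies every one of them by `(det L)²`. Taking `t, s, r` and
`t', s', r'` to be the actual distances turns each `⁴q_j`, `⁵q_j` into such a determinant, and `⁵q`
into the Cayley–Menger determinant of five points of `ℝ³`; the latter vanishes because five points
of `ℝ³` are affinely dependent, and an affine dependence yields a kernel vector of the bordered
distance matrix.
-/

/-- The Cayley–Menger-type determinant built from the six prescribed squared
distances `d01, d02, d03, d12, d13, d23` of a quadruple of points: the determinant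
of the `5 × 5` matrix with `0` in the corner, `1`'s in the rest of the first row
and column, and the `d_{ij}`'s placed symmetrically. -/
noncomputable def cmQ (d01 d02 d03 d12 d13 d23 : ℝ) : ℝ :=
  Matrix.det !![0, 1, 1, 1, 1;
                1, 0, d01, d02, d03;
                1, d01, 0, d12, d13;
                1, d02, d12, 0, d23;
                1, d03, d13, d23, 0]

/-- The Cayley–Menger determinant `cm(y₀,y₁,y₂,y₃)` of four points of `ℝ³`. -/
noncomputable def cm4 (y : Fin 4 → EuclideanSpace ℝ (Fin 3)) : ℝ :=
  cmQ (dist (y 0) (y 1) ^ 2) (dist (y 0) (y 2) ^ 2) (dist (y 0) (y 3) ^ 2)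
      (dist (y 1) (y 2) ^ 2) (dist (y 1) (y 3) ^ 2) (dist (y 2) (y 3) ^ 2)

/-- `⁴q₀(t,s)`: the Cayley–Menger determinant of the quadruple `(x₁,x₂,x₃,x₄)`
in which `dist(x₁,x₃)²` is replaced by `t²` and `dist(x₂,x₄)²` by `s²`. -/
noncomputable def q40 (x : Fin 5 → EuclideanSpace ℝ (Fin 3)) (t s : ℝ) : ℝ :=
  cmQ (dist (x 1) (x 2) ^ 2) (t ^ 2) (dist (x 1) (x 4) ^ 2)
      (dist (x 2) (x 3) ^ 2) (s ^ 2) (dist (x 3) (x 4) ^ 2)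

/-- `⁴q₁(s)`: the Cayley–Menger determinant of the quadruple `(x₀,x₂,x₃,x₄)`
in which `dist(x₂,x₄)²` is replaced by `s²`. -/
noncomputable def q41 (x : Fin 5 → EuclideanSpace ℝ (Fin 3)) (s : ℝ) : ℝ :=
  cmQ (dist (x 0) (x 2) ^ 2) (dist (x 0) (x 3) ^ 2) (dist (x 0) (x 4) ^ 2)
      (dist (x 2) (x 3) ^ 2) (s ^ 2) (dist (x 3) (x 4) ^ 2)

/-- `⁴q₂(t)`: the Cayley–Menger determinant of the quadruple `(x₀,x₁,x₃,x₄)`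
in which `dist(x₁,x₃)²` is replaced by `t²`. -/
noncomputable def q42 (x : Fin 5 → EuclideanSpace ℝ (Fin 3)) (t : ℝ) : ℝ :=
  cmQ (dist (x 0) (x 1) ^ 2) (dist (x 0) (x 3) ^ 2) (dist (x 0) (x 4) ^ 2)
      (t ^ 2) (dist (x 1) (x 4) ^ 2) (dist (x 3) (x 4) ^ 2)

/-- `⁴q₃(s)`: the Cayley–Menger determinant of the quadruple `(x₀,x₁,x₂,x₄)`
in which `dist(x₂,x₄)²` is replaced by `s²`. -/
noncomputable def q43 (x : Fin 5 → EuclideanSpace ℝ (Fin 3)) (s : ℝ) : ℝ :=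
  cmQ (dist (x 0) (x 1) ^ 2) (dist (x 0) (x 2) ^ 2) (dist (x 0) (x 4) ^ 2)
      (dist (x 1) (x 2) ^ 2) (dist (x 1) (x 4) ^ 2) (s ^ 2)

/-- `⁴q₄(t)`: the Cayley–Menger determinant of the quadruple `(x₀,x₁,x₂,x₃)`
in which `dist(x₁,x₃)²` is replaced by `t²`. -/
noncomputable def q44 (x : Fin 5 → EuclideanSpace ℝ (Fin 3)) (t : ℝ) : ℝ :=
  cmQ (dist (x 0) (x 1) ^ 2) (dist (x 0) (x 2) ^ 2) (dist (x 0) (x 3) ^ 2)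
      (dist (x 1) (x 2) ^ 2) (t ^ 2) (dist (x 2) (x 3) ^ 2)

/-- The Cayley–Menger-type determinant built from the ten prescribed squared
distances of a quintuple of points: the determinant of the `6 × 6` matrix with
`0` in the corner, `1`'s in the rest of the first row and column, and the
`d_{ij}`'s placed symmetrically. -/
noncomputable def cmP (d01 d02 d03 d04 d12 d13 d14 d23 d24 d34 : ℝ) : ℝ :=
  Matrix.det !![0, 1, 1, 1, 1, 1;
                1, 0, d01, d02, d03, d04;
                1, d01, 0, d12, d13, d14;
                1, d02, d12, 0, d23, d24;
                1, d03, d13, d23, 0, d34;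
                1, d04, d14, d24, d34, 0]

/-- `⁵q₀(t,s,r)`: the Cayley–Menger determinant of the quadruple `(x₁,x₂,x₃,x₄)`
in which `dist(x₁,x₃)²` is replaced by `t²`, `dist(x₂,x₄)²` by `s²`, and
`dist(x₁,x₄)²` by `r²`. -/
noncomputable def q50 (x : Fin 5 → EuclideanSpace ℝ (Fin 3)) (t s r : ℝ) : ℝ :=
  cmQ (dist (x 1) (x 2) ^ 2) (t ^ 2) (r ^ 2)
      (dist (x 2) (x 3) ^ 2) (s ^ 2) (dist (x 3) (x 4) ^ 2)

/-- `⁵q₁(s)`: the Cayley–Menger determinant of the quadruple `(x₀,x₂,x₃,x₄)`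
in which `dist(x₂,x₄)²` is replaced by `s²`. -/
noncomputable def q51 (x : Fin 5 → EuclideanSpace ℝ (Fin 3)) (s : ℝ) : ℝ :=
  cmQ (dist (x 0) (x 2) ^ 2) (dist (x 0) (x 3) ^ 2) (dist (x 0) (x 4) ^ 2)
      (dist (x 2) (x 3) ^ 2) (s ^ 2) (dist (x 3) (x 4) ^ 2)

/-- `⁵q₂(t,r)`: the Cayley–Menger determinant of the quadruple `(x₀,x₁,x₃,x₄)`
in which `dist(x₁,x₃)²` is replaced by `t²` and `dist(x₁,x₄)²` by `r²`. -/
noncomputable def q52 (x : Fin 5 → EuclideanSpace ℝ (Fin 3)) (t r : ℝ) : ℝ :=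
  cmQ (dist (x 0) (x 1) ^ 2) (dist (x 0) (x 3) ^ 2) (dist (x 0) (x 4) ^ 2)
      (t ^ 2) (r ^ 2) (dist (x 3) (x 4) ^ 2)

/-- `⁵q₃(s,r)`: the Cayley–Menger determinant of the quadruple `(x₀,x₁,x₂,x₄)`
in which `dist(x₂,x₄)²` is replaced by `s²` and `dist(x₁,x₄)²` by `r²`. -/
noncomputable def q53 (x : Fin 5 → EuclideanSpace ℝ (Fin 3)) (s r : ℝ) : ℝ :=
  cmQ (dist (x 0) (x 1) ^ 2) (dist (x 0) (x 2) ^ 2) (dist (x 0) (x 4) ^ 2)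
      (dist (x 1) (x 2) ^ 2) (r ^ 2) (s ^ 2)

/-- `⁵q₄(t)`: the Cayley–Menger determinant of the quadruple `(x₀,x₁,x₂,x₃)`
in which `dist(x₁,x₃)²` is replaced by `t²`. -/
noncomputable def q54 (x : Fin 5 → EuclideanSpace ℝ (Fin 3)) (t : ℝ) : ℝ :=
  cmQ (dist (x 0) (x 1) ^ 2) (dist (x 0) (x 2) ^ 2) (dist (x 0) (x 3) ^ 2)
      (dist (x 1) (x 2) ^ 2) (t ^ 2) (dist (x 2) (x 3) ^ 2)

/-- `⁵q(t,s,r)`: the `6 × 6` Cayley–Menger determinant of all five points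
`(x₀,x₁,x₂,x₃,x₄)` in which `dist(x₁,x₃)²` is replaced by `t²`, `dist(x₂,x₄)²`
by `s²`, and `dist(x₁,x₄)²` by `r²`. -/
noncomputable def q5full (x : Fin 5 → EuclideanSpace ℝ (Fin 3)) (t s r : ℝ) : ℝ :=
  cmP (dist (x 0) (x 1) ^ 2) (dist (x 0) (x 2) ^ 2) (dist (x 0) (x 3) ^ 2)
      (dist (x 0) (x 4) ^ 2) (dist (x 1) (x 2) ^ 2) (t ^ 2) (r ^ 2)
      (dist (x 2) (x 3) ^ 2) (s ^ 2) (dist (x 3) (x 4) ^ 2)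

open Matrix Module
open scoped RealInnerProductSpace

theorem cmQ_of_gram (g₁₁ g₁₂ g₁₃ g₂₂ g₂₃ g₃₃ : ℝ) :
    cmQ g₁₁ g₂₂ g₃₃ (g₁₁ - 2 * g₁₂ + g₂₂) (g₁₁ - 2 * g₁₃ + g₃₃) (g₂₂ - 2 * g₂₃ + g₃₃) =
      8 * !![g₁₁, g₁₂, g₁₃; g₁₂, g₂₂, g₂₃; g₁₃, g₂₃, g₃₃].det := by
  simp [cmQ, det_succ_row_zero (n := 4), det_succ_row_zero (n := 3), Fin.succAbove,
    det_fin_three, Fin.sum_univ_succ]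
  ring

def cayleyMengerMatrix {X : Type*} [PseudoMetricSpace X] {n : ℕ} (p : Fin n → X) :
    Matrix (Fin (n + 1)) (Fin (n + 1)) ℝ :=
  of (vecCons (vecCons 0 1) fun k => vecCons 1 fun l => dist (p k) (p l) ^ 2)

theorem cmP_dist_sq {X : Type*} [PseudoMetricSpace X] (p : Fin 5 → X) :
    cmP (dist (p 0) (p 1) ^ 2) (dist (p 0) (p 2) ^ 2) (dist (p 0) (p 3) ^ 2)
        (dist (p 0) (p 4) ^ 2) (dist (p 1) (p 2) ^ 2) (dist (p 1) (p 3) ^ 2)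
        (dist (p 1) (p 4) ^ 2) (dist (p 2) (p 3) ^ 2) (dist (p 2) (p 4) ^ 2)
        (dist (p 3) (p 4) ^ 2) =
      (cayleyMengerMatrix p).det := by
  rw [cmP]
  congr 1
  ext i j
  fin_cases i <;> fin_cases j <;> simp [cayleyMengerMatrix, dist_comm]

variable {V : Type*} [NormedAddCommGroup V] [InnerProductSpace ℝ V]

theorem det_gram_eq_basis_det_sq {ι : Type*} [Fintype ι] [DecidableEq ι]
    (b : OrthonormalBasis ι ℝ V) (v : ι → V) :
    (gram ℝ v).det = b.toBasis.det v ^ 2 := by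
  rw [gram_eq_conjTranspose_mul b, det_mul, det_conjTranspose, b.toBasis.det_apply, sq]
  rfl

theorem det_gram_comp [FiniteDimensional ℝ V] {ι : Type*} [Fintype ι] [DecidableEq ι]
    (hι : finrank ℝ V = Fintype.card ι) (f : V →ₗ[ℝ] V) (v : ι → V) :
    (gram ℝ (f ∘ v)).det = LinearMap.det f ^ 2 * (gram ℝ v).det := by
  let b := (stdOrthonormalBasis ℝ V).reindex (Fintype.equivFinOfCardEq hι.symm).symm
  rw [det_gram_eq_basis_det_sq b, det_gram_eq_basis_det_sq b, Basis.det_comp]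
  ring

theorem cmQ_dist_sq (q₀ q₁ q₂ q₃ : V) :
    cmQ (dist q₀ q₁ ^ 2) (dist q₀ q₂ ^ 2) (dist q₀ q₃ ^ 2)
        (dist q₁ q₂ ^ 2) (dist q₁ q₃ ^ 2) (dist q₂ q₃ ^ 2) =
      8 * (gram ℝ ![q₁ - q₀, q₂ - q₀, q₃ - q₀]).det := by
  have hd : ∀ x y : V, dist x y ^ 2 =
      ⟪x - q₀, x - q₀⟫ - 2 * ⟪x - q₀, y - q₀⟫ + ⟪y - q₀, y - q₀⟫ := fun x y => by
    rw [dist_eq_norm, show x - y = (x - q₀) - (y - q₀) by abel, norm_sub_sq_real,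
      real_inner_self_eq_norm_sq, real_inner_self_eq_norm_sq]
  have hd₀ : ∀ x : V, dist q₀ x ^ 2 = ⟪x - q₀, x - q₀⟫ := fun x => by
    rw [dist_comm, dist_eq_norm, real_inner_self_eq_norm_sq]
  rw [hd₀, hd₀, hd₀, hd, hd, hd, cmQ_of_gram]
  congr 2
  ext i j
  fin_cases i <;> fin_cases j <;> simp [real_inner_comm]

theorem cmQ_dist_sq_map [FiniteDimensional ℝ V] (hV : finrank ℝ V = 3) (A : V →ᵃ[ℝ] V)
    (q₀ q₁ q₂ q₃ : V) :
    cmQ (dist (A q₀) (A q₁) ^ 2) (dist (A q₀) (A q₂) ^ 2) (dist (A q₀) (A q₃) ^ 2)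
        (dist (A q₁) (A q₂) ^ 2) (dist (A q₁) (A q₃) ^ 2) (dist (A q₂) (A q₃) ^ 2) =
      LinearMap.det A.linear ^ 2 *
        cmQ (dist q₀ q₁ ^ 2) (dist q₀ q₂ ^ 2) (dist q₀ q₃ ^ 2)
          (dist q₁ q₂ ^ 2) (dist q₁ q₃ ^ 2) (dist q₂ q₃ ^ 2) := by
  have hA : ![A q₁ - A q₀, A q₂ - A q₀, A q₃ - A q₀] =
      A.linear ∘ ![q₁ - q₀, q₂ - q₀, q₃ - q₀] := by
    ext1 i
    fin_cases i <;> simp [← vsub_eq_sub, AffineMap.linearMap_vsub]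
  rw [cmQ_dist_sq, cmQ_dist_sq, hA, det_gram_comp (by simp [hV])]
  ring

theorem det_cayleyMengerMatrix_eq_zero {n : ℕ} {p : Fin n → V} (hp : ¬AffineIndependent ℝ p) :
    (cayleyMengerMatrix p).det = 0 := by
  rw [affineIndependent_iff_of_fintype] at hp
  push Not at hp
  obtain ⟨w, hw, hwp, i, hi⟩ := hp
  rw [Finset.univ.weightedVSub_eq_linear_combination hw] at hwp
  set S := ∑ j, w j * ‖p j‖ ^ 2
  have hrow : ∀ k, ∑ j, dist (p k) (p j) ^ 2 * w j = S := fun k => by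
    have hk : ∑ j, w j * ⟪p k, p j⟫ = 0 := by
      simpa [inner_sum, real_inner_smul_right] using congrArg (⟪p k, ·⟫) hwp
    calc ∑ j, dist (p k) (p j) ^ 2 * w j
        = ∑ j, (‖p k‖ ^ 2 * w j - 2 * (w j * ⟪p k, p j⟫) + w j * ‖p j‖ ^ 2) := by
          refine Finset.sum_congr rfl fun j _ => ?_
          rw [dist_eq_norm, norm_sub_sq_real]
          ring
      _ = ‖p k‖ ^ 2 * ∑ j, w j - 2 * ∑ j, w j * ⟪p k, p j⟫ + S := by
          simp only [Finset.sum_add_distrib, Finset.sum_sub_distrib, Finset.mul_sum, S]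
      _ = S := by rw [hw, hk]; ring
  -- `(-S, w)` is in the kernel: row `k + 1` is `-S + ‖pₖ‖² ∑ wⱼ - 2 ⟪pₖ, ∑ wⱼ pⱼ⟫ + S = 0`
  refine exists_mulVec_eq_zero_iff.mp ⟨Fin.cons (-S) w, fun h => hi ?_, ?_⟩
  · simpa using congrFun h i.succ
  · ext k
    refine Fin.cases ?_ (fun k => ?_) k <;>
      simp [cayleyMengerMatrix, mulVec, dotProduct, Fin.sum_univ_succ, hw, hrow]

theorem not_affineIndependent_of_finrank_le [FiniteDimensional ℝ V] {n : ℕ}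
    (hV : finrank ℝ V ≤ n) (p : Fin (n + 2) → V) : ¬AffineIndependent ℝ p :=
  (finrank_vectorSpan_le_iff_not_affineIndependent ℝ p (Fintype.card_fin _)).mp
    ((Submodule.finrank_le _).trans hV)

theorem cmP_dist_sq_eq_zero [FiniteDimensional ℝ V] (hV : finrank ℝ V ≤ 3) (p : Fin 5 → V) :
    cmP (dist (p 0) (p 1) ^ 2) (dist (p 0) (p 2) ^ 2) (dist (p 0) (p 3) ^ 2)
        (dist (p 0) (p 4) ^ 2) (dist (p 1) (p 2) ^ 2) (dist (p 1) (p 3) ^ 2)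
        (dist (p 1) (p 4) ^ 2) (dist (p 2) (p 3) ^ 2) (dist (p 2) (p 4) ^ 2)
        (dist (p 3) (p 4) ^ 2) = 0 := by
  rw [cmP_dist_sq]
  exact det_cayleyMengerMatrix_eq_zero (not_affineIndependent_of_finrank_le hV p)

/-- Theorem 8 of the paper: an invertible affine map `A : ℝ³ → ℝ³`
with linear part `L` produces a single positive constant `α* = (det L)²` which
simultaneously (i) scales the Cayley–Menger determinant of every affinely
independent quadruple, (ii) gives an all-positive solution of the five-equation
system `⁴q'_j = α·⁴q_j` for every quintuple with `y₁ ≠ y₃`, `y₂ ≠ y₄`, and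
(iii) gives an all-positive solution of the seven-equation system
`⁵q'_j = α·⁵q_j`, `⁵q = 0`, `⁵q' = 0` for every quintuple with `y₁ ≠ y₃`,
`y₂ ≠ y₄`, `y₁ ≠ y₄`. -/
theorem uniform_alpha_for_affine_equivalence
    (A : EuclideanSpace ℝ (Fin 3) →ᵃ[ℝ] EuclideanSpace ℝ (Fin 3))
    (hA : Function.Bijective A) :
    ∃ αs : ℝ, αs = (LinearMap.det A.linear) ^ 2 ∧ 0 < αs ∧
      (∀ y : Fin 4 → EuclideanSpace ℝ (Fin 3), AffineIndependent ℝ y →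
        cm4 (fun i => A (y i)) = αs * cm4 y) ∧
      (∀ y : Fin 5 → EuclideanSpace ℝ (Fin 3), y 1 ≠ y 3 → y 2 ≠ y 4 →
        ∃ t s t' s' : ℝ, 0 < t ∧ 0 < s ∧ 0 < t' ∧ 0 < s' ∧
          q40 (fun i => A (y i)) t' s' = αs * q40 y t s ∧
          q41 (fun i => A (y i)) s' = αs * q41 y s ∧
          q42 (fun i => A (y i)) t' = αs * q42 y t ∧
          q43 (fun i => A (y i)) s' = αs * q43 y s ∧
          q44 (fun i => A (y i)) t' = αs * q44 y t) ∧
      (∀ y : Fin 5 → EuclideanSpace ℝ (Fin 3), y 1 ≠ y 3 → y 2 ≠ y 4 → y 1 ≠ y 4 →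
        ∃ t s r t' s' r' : ℝ, 0 < t ∧ 0 < s ∧ 0 < r ∧ 0 < t' ∧ 0 < s' ∧ 0 < r' ∧
          q50 (fun i => A (y i)) t' s' r' = αs * q50 y t s r ∧
          q51 (fun i => A (y i)) s' = αs * q51 y s ∧
          q52 (fun i => A (y i)) t' r' = αs * q52 y t r ∧
          q53 (fun i => A (y i)) s' r' = αs * q53 y s r ∧
          q54 (fun i => A (y i)) t' = αs * q54 y t ∧
          q5full y t s r = 0 ∧
          q5full (fun i => A (y i)) t' s' r' = 0) := by
  have hdim : finrank ℝ (EuclideanSpace ℝ (Fin 3)) = 3 := finrank_euclideanSpace_fin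
  have hdet : LinearMap.det A.linear ≠ 0 :=
    (LinearMap.isUnit_det _ ((End.isUnit_iff _).2 (A.linear_bijective_iff.2 hA))).ne_zero
  have hcm := cmQ_dist_sq_map hdim A
  have hcm₅ := cmP_dist_sq_eq_zero hdim.le
  have hdist {x y} (h : x ≠ y) : 0 < dist x y ∧ 0 < dist (A x) (A y) :=
    ⟨dist_pos.2 h, dist_pos.2 (hA.injective.ne h)⟩
  refine ⟨_, rfl, by positivity, fun y _ => hcm _ _ _ _, fun y h₁₃ h₂₄ => ?_,
    fun y h₁₃ h₂₄ h₁₄ => ?_⟩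
  · obtain ⟨ht, ht'⟩ := hdist h₁₃
    obtain ⟨hs, hs'⟩ := hdist h₂₄
    exact ⟨_, _, _, _, ht, hs, ht', hs', hcm _ _ _ _, hcm _ _ _ _, hcm _ _ _ _, hcm _ _ _ _,
      hcm _ _ _ _⟩
  · obtain ⟨ht, ht'⟩ := hdist h₁₃
    obtain ⟨hs, hs'⟩ := hdist h₂₄
    obtain ⟨hr, hr'⟩ := hdist h₁₄
    exact ⟨_, _, _, _, _, _, ht, hs, hr, ht', hs', hr', hcm _ _ _ _, hcm _ _ _ _, hcm _ _ _ _,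
      hcm _ _ _ _, hcm _ _ _ _, hcm₅ y, hcm₅ (fun i => A (y i))⟩
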